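/- Let Ψ: ℤ → ℂ, let F: ℤ → GL(2,ℂ) satisfy F_{k+1} = L_k(1)·F_k for all k, and set S_k := F_k⁻¹·𝐈·F_k. Then for every k ∈ ℤ: 1 + ⟨S_k, S_{k+1}⟩ ≠ 0 and ‖(1/2)[S_k, S_{k+1}]‖ / (1 + ⟨S_k, S_{k+1}⟩) = |Ψ_k|, i.e. the norm of the cross product of S_k and S_{k+1} divided by 1 plus their inner product equals the modulus of Ψ_k. -/

import Mathlib

open Matrix

noncomputable section

/-- `𝐈 = i σ₃`. -/
def matI : Matrix (Fin 2) (Fin 2) ℂ := !![Complex.I, 0; 0, -Complex.I]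

/-- The `su(2)` inner product `⟨X,Y⟩ = -(1/2) tr (XY)`. -/
def suInner (X Y : Matrix (Fin 2) (Fin 2) ℂ) : ℝ := (-(Matrix.trace (X * Y)) / 2).re

/-- The `su(2)` norm `‖X‖ = √(-(1/2) tr X²)`. -/
def suNorm (X : Matrix (Fin 2) (Fin 2) ℂ) : ℝ := Real.sqrt (suInner X X)

/-- The (gauged) Ablowitz–Ladik Lax matrix `L_k(μ)`. -/
def Lmat (Ψ : ℤ → ℂ) (μ : ℂ) (k : ℤ) : Matrix (Fin 2) (Fin 2) ℂ :=
  !![1, Ψ k; -(starRingEnd ℂ) (Ψ k), 1] * !![μ, 0; 0, μ⁻¹]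

lemma conj_reduce (A X Y : Matrix (Fin 2) (Fin 2) ℂ) (hA : IsUnit A) :
    (A⁻¹ * X * A) * (A⁻¹ * Y * A) = A⁻¹ * (X * Y) * A := by
  have h1 : A * A⁻¹ = 1 := Matrix.mul_nonsing_inv A ((Matrix.isUnit_iff_isUnit_det A).mp hA)
  calc (A⁻¹ * X * A) * (A⁻¹ * Y * A) = A⁻¹ * X * (A * A⁻¹) * (Y * A) := by
        simp only [Matrix.mul_assoc]
      _ = A⁻¹ * (X * Y) * A := by rw [h1]; simp only [Matrix.mul_one, Matrix.mul_assoc]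

lemma trace_conj (A Z : Matrix (Fin 2) (Fin 2) ℂ) (hA : IsUnit A) :
    Matrix.trace (A⁻¹ * Z * A) = Matrix.trace Z := by
  have h1 : A * A⁻¹ = 1 := Matrix.mul_nonsing_inv A ((Matrix.isUnit_iff_isUnit_det A).mp hA)
  rw [Matrix.trace_mul_cycle, h1, Matrix.one_mul]

lemma suInner_conj (A X Y : Matrix (Fin 2) (Fin 2) ℂ) (hA : IsUnit A) :
    suInner (A⁻¹ * X * A) (A⁻¹ * Y * A) = suInner X Y := by
  rw [suInner, conj_reduce A X Y hA, trace_conj A _ hA, suInner]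

lemma bracket_conj (A X Y : Matrix (Fin 2) (Fin 2) ℂ) (hA : IsUnit A) :
    ⁅A⁻¹ * X * A, A⁻¹ * Y * A⁆ = A⁻¹ * ⁅X, Y⁆ * A := by
  simp only [Ring.lie_def, conj_reduce _ _ _ hA, Matrix.mul_sub, Matrix.sub_mul]

/-- explicit inner product `⟨I, T⟩`. -/
lemma inner_matI_T (ψ : ℂ) :
    suInner matI ((1 + ψ * (starRingEnd ℂ) ψ)⁻¹ •
      !![Complex.I * (1 - ψ * (starRingEnd ℂ) ψ), 2 * Complex.I * ψ;
         2 * Complex.I * (starRingEnd ℂ) ψ, -(Complex.I * (1 - ψ * (starRingEnd ℂ) ψ))]) =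
      (1 - Complex.normSq ψ) / (1 + Complex.normSq ψ) := by
  set r := Complex.normSq ψ with hr
  have hr0 : (0:ℝ) ≤ r := Complex.normSq_nonneg ψ
  have hd : (1:ℝ) + r ≠ 0 := by positivity
  have hdC : (1:ℂ) + (r:ℂ) ≠ 0 := by
    rw [show (1:ℂ) + (r:ℂ) = ((1 + r : ℝ) : ℂ) by push_cast; ring]
    exact Complex.ofReal_ne_zero.mpr hd
  have hc : ψ * (starRingEnd ℂ) ψ = (r : ℂ) := Complex.mul_conj ψ
  rw [suInner, Matrix.mul_smul, Matrix.trace_smul, matI, Matrix.mul_fin_two,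
    Matrix.trace_fin_two_of, hc]
  rw [show ((1-r)/(1+r) : ℝ) = (((1-r)/(1+r):ℝ):ℂ).re from (Complex.ofReal_re _).symm]
  congr 1
  rw [smul_eq_mul]
  push_cast
  field_simp
  ring_nf
  simp [Complex.I_sq]
  ring

/-- explicit bracket `⁅I, T⁆`. -/
lemma bracket_matI_T (ψ : ℂ) :
    ⁅matI, ((1 + ψ * (starRingEnd ℂ) ψ)⁻¹ •
      !![Complex.I * (1 - ψ * (starRingEnd ℂ) ψ), 2 * Complex.I * ψ;
         2 * Complex.I * (starRingEnd ℂ) ψ, -(Complex.I * (1 - ψ * (starRingEnd ℂ) ψ))])⁆ =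
    (1 + ψ * (starRingEnd ℂ) ψ)⁻¹ • !![0, -4 * ψ; 4 * (starRingEnd ℂ) ψ, 0] := by
  rw [Ring.lie_def, Matrix.mul_smul, Matrix.smul_mul, ← smul_sub, matI,
    Matrix.mul_fin_two, Matrix.mul_fin_two]
  congr 1
  ext i j
  fin_cases i <;> fin_cases j <;>
    simp [Matrix.sub_apply] <;> ring_nf <;> simp [Complex.I_sq]

/-- explicit inner product `⟨C, C⟩` for the half-bracket. -/
lemma inner_C_C (ψ : ℂ) :
    suInner ((1/2:ℝ) • ((1 + ψ * (starRingEnd ℂ) ψ)⁻¹ • !![0, -4 * ψ; 4 * (starRingEnd ℂ) ψ, 0]))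
            ((1/2:ℝ) • ((1 + ψ * (starRingEnd ℂ) ψ)⁻¹ • !![0, -4 * ψ; 4 * (starRingEnd ℂ) ψ, 0]))
      = 4 * Complex.normSq ψ / (1 + Complex.normSq ψ)^2 := by
  set r := Complex.normSq ψ with hr
  have hr0 : (0:ℝ) ≤ r := Complex.normSq_nonneg ψ
  have hd : (1:ℝ) + r ≠ 0 := by positivity
  have hc : ψ * (starRingEnd ℂ) ψ = (r : ℂ) := Complex.mul_conj ψ
  have hc' : (starRingEnd ℂ) ψ * ψ = (r : ℂ) := by rw [mul_comm, hc]
  rw [suInner, Matrix.mul_smul, Matrix.smul_mul, Matrix.mul_smul, Matrix.smul_mul,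
    Matrix.mul_fin_two]
  simp only [Matrix.trace_smul, Matrix.trace_fin_two_of, hc, hc']
  rw [show (4*r/(1+r)^2 : ℝ) = (((4*r/(1+r)^2:ℝ)):ℂ).re from (Complex.ofReal_re _).symm]
  rw [show ∀ z : ℂ, (1/2:ℝ) • z = (1/2:ℂ) * z from fun z => by
    rw [Complex.real_smul]; push_cast; ring]
  congr 1
  rw [smul_eq_mul, smul_eq_mul]
  push_cast
  have hdC : (1:ℂ) + (r:ℂ) ≠ 0 := by
    rw [show (1:ℂ) + (r:ℂ) = ((1 + r : ℝ) : ℂ) by push_cast; ring]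
    exact Complex.ofReal_ne_zero.mpr hd
  have hc2 : (starRingEnd ℂ) ψ ^ 2 * ψ ^ 2 = (r:ℂ)^2 := by rw [← mul_pow, hc']
  have hc3 : (starRingEnd ℂ) ψ ^ 3 * ψ ^ 3 = (r:ℂ)^3 := by rw [← mul_pow, hc']
  ring_nf
  simp only [Complex.real_smul]
  push_cast
  have h1 : ((1:ℂ) + (r:ℂ) * 2 + (r:ℂ) ^ 2) ≠ 0 := by
    have h : ((1:ℝ) + r * 2 + r ^ 2) ≠ 0 := by positivity
    intro hh; apply h; exact_mod_cast hh
  field_simp [h1]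
  have hinv : ((1:ℂ) + (r:ℂ) * 2 + (r:ℂ) ^ 2) * ((1:ℂ) + (r:ℂ) * 2 + (r:ℂ) ^ 2)⁻¹ = 1 :=
    mul_inv_cancel₀ h1
  linear_combination 32 * hc - 32 * (r:ℂ) * hinv

/-- For `S_k = F_k⁻¹ 𝐈 F_k` one has
`‖S_k × S_{k+1}‖ / (1 + ⟨S_k, S_{k+1}⟩) = |Ψ_k|`, where the cross product is
`(1/2)[S_k, S_{k+1}]`. -/
theorem norm_cross_div_eq_abs_Psi (Ψ : ℤ → ℂ) (F : ℤ → Matrix (Fin 2) (Fin 2) ℂ)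
    (hFunit : ∀ k : ℤ, IsUnit (F k))
    (hFrec : ∀ k : ℤ, F (k + 1) = Lmat Ψ 1 k * F k)
    (S : ℤ → Matrix (Fin 2) (Fin 2) ℂ)
    (hS : ∀ k : ℤ, S k = (F k)⁻¹ * matI * F k) :
    ∀ k : ℤ,
      1 + suInner (S k) (S (k + 1)) ≠ 0 ∧
      suNorm ((1 / 2 : ℝ) • ⁅S k, S (k + 1)⁆) / (1 + suInner (S k) (S (k + 1))) =
        ‖Ψ k‖ := by
  intro k
  set ψ := Ψ k with hψ
  set r := Complex.normSq ψ with hr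
  have hr0 : (0:ℝ) ≤ r := Complex.normSq_nonneg ψ
  have hd : (0:ℝ) < 1 + r := by positivity
  have hA : IsUnit (F k) := hFunit k
  -- explicit form of L and its inverse
  have hL : Lmat Ψ 1 k = !![1, ψ; -(starRingEnd ℂ) ψ, 1] := by
    simp [Lmat, Matrix.mul_fin_two]; exact ⟨rfl, rfl⟩
  have hLinv : (Lmat Ψ 1 k)⁻¹ = (1 + ψ * (starRingEnd ℂ) ψ)⁻¹ •
      !![1, -ψ; (starRingEnd ℂ) ψ, 1] := by
    rw [Matrix.inv_def, hL, Matrix.adjugate_fin_two_of, Matrix.det_fin_two_of,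
      Ring.inverse_eq_inv]
    norm_num
  -- the conjugated matrix T
  set T : Matrix (Fin 2) (Fin 2) ℂ :=
    (1 + ψ * (starRingEnd ℂ) ψ)⁻¹ •
      !![Complex.I * (1 - ψ * (starRingEnd ℂ) ψ), 2 * Complex.I * ψ;
         2 * Complex.I * (starRingEnd ℂ) ψ, -(Complex.I * (1 - ψ * (starRingEnd ℂ) ψ))] with hT
  have hTval : (Lmat Ψ 1 k)⁻¹ * matI * Lmat Ψ 1 k = T := by
    rw [hLinv, hL, hT, Matrix.smul_mul, Matrix.smul_mul, matI, Matrix.mul_fin_two,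
      Matrix.mul_fin_two]
    congr 1
    ext i j
    fin_cases i <;> fin_cases j <;> simp <;> ring
  -- S k and S (k+1) as conjugates
  have hSk : S k = (F k)⁻¹ * matI * F k := hS k
  have hSk1 : S (k + 1) = (F k)⁻¹ * T * F k := by
    rw [hS, hFrec, Matrix.mul_inv_rev, ← hTval]
    simp only [Matrix.mul_assoc]
  -- reduce the invariants
  have hinner : suInner (S k) (S (k + 1)) = suInner matI T := by
    rw [hSk, hSk1, suInner_conj _ _ _ hA]
  have hbr : (1/2:ℝ) • ⁅S k, S (k + 1)⁆ =
      (F k)⁻¹ * ((1/2:ℝ) • ⁅matI, T⁆) * (F k) := by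
    rw [hSk, hSk1, bracket_conj _ _ _ hA, Matrix.mul_smul, Matrix.smul_mul]
  have hnorm : suNorm ((1/2:ℝ) • ⁅S k, S (k + 1)⁆) =
      suNorm ((1/2:ℝ) • ⁅matI, T⁆) := by
    rw [suNorm, suNorm, hbr, suInner_conj _ _ _ hA]
  -- explicit values
  have hinner' : suInner (S k) (S (k + 1)) = (1 - r) / (1 + r) := by
    rw [hinner, hT]; exact inner_matI_T ψ
  have honeplus : 1 + suInner (S k) (S (k + 1)) = 2 / (1 + r) := by
    rw [hinner']; field_simp; norm_num
  have hCC : suInner ((1/2:ℝ) • ⁅matI, T⁆) ((1/2:ℝ) • ⁅matI, T⁆)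
      = 4 * r / (1 + r)^2 := by
    rw [hT, bracket_matI_T ψ]
    exact inner_C_C ψ
  have hnorm' : suNorm ((1/2:ℝ) • ⁅S k, S (k + 1)⁆) = 2 * ‖ψ‖ / (1 + r) := by
    rw [hnorm, suNorm, hCC,
      show (4 * r / (1 + r)^2 : ℝ) = (2 * ‖ψ‖ / (1 + r))^2 by
        rw [div_pow, mul_pow, Complex.sq_norm, ← hr]; norm_num]
    exact Real.sqrt_sq (by positivity)
  constructor
  · rw [honeplus]; positivity
  · rw [honeplus, hnorm']
    rw [show ‖Ψ k‖ = ‖ψ‖ from rfl]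
    field_simp
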